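/- arXiv:1312.3122 — 2 statements merged into one kernel-verified Lean document; each statement's English description precedes it below -/
import Mathlib

section
/- Let f: 𝔻 → ℂ be twice continuously differentiable on the open unit disk with Re(conj(f)·Δf) ≥ 0. Then for every p ∈ [2,∞), the integral means M_p^p(r,f) = (1/2π) ∫₀^{2π} |f(re^{iθ})|^p dθ form an increasing function of r on (0,1). -/
/-!
Put `q = p / 2` and `u_ε = (‖f‖² + ε) ^ q` for `ε > 0`. Since `Δ‖f‖² = 2 ‖∇f‖² + 2 Re (f̄ Δf) ≥ 0`
and `Δ φ(v) = φ''(v) ‖∇v‖² + φ'(v) Δv` with `φ(t) = (t + ε) ^ q` convex and increasing, every `u_ε`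
is a C² function with `Δu_ε ≥ 0`. For such a `u`, the circle integral `I(r) = ∫ u(r e^{iθ}) dθ`
satisfies `(r I'(r))' = r ∫ Δu(r e^{iθ}) dθ ≥ 0`, because the second angular derivative integrates
to zero over a period; as `r I'(r)` vanishes at `r = 0`, `I' ≥ 0` on `(0, 1)`. Letting `ε → 0⁺`
gives the claim for `‖f‖ ^ p`.
-/

open Complex Metric MeasureTheory

/-- The (real) Laplacian Δg = g_xx + g_yy of a function on ℂ. -/
noncomputable def lap {E : Type*} [NormedAddCommGroup E] [NormedSpace ℝ E]
    (g : ℂ → E) (z : ℂ) : E :=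
  fderiv ℝ (fun w => fderiv ℝ g w 1) z 1 +
    fderiv ℝ (fun w => fderiv ℝ g w Complex.I) z Complex.I

open Filter Topology Set Real

section NormedSpace

variable {F : Type*} [NormedAddCommGroup F] [NormedSpace ℝ F]

theorem circleMap_zero_eq_smul (r θ : ℝ) : circleMap 0 r θ = r • circleMap 0 1 θ := by
  simp [circleMap_zero, Complex.real_smul]

theorem circleMap_zero_mem_ball {r R : ℝ} (hr : |r| < R) (θ : ℝ) :
    circleMap 0 r θ ∈ ball (0 : ℂ) R := by
  simpa [norm_circleMap_zero] using hr

theorem hasDerivAt_integral_circleMap_radius {φ : ℂ → F} {r R : ℝ}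
    (hφ : ContDiffOn ℝ 1 φ (ball 0 R)) (hr : |r| < R) :
    HasDerivAt (fun s => ∫ θ in 0..2 * π, φ (circleMap 0 s θ))
      (∫ θ in 0..2 * π, fderiv ℝ φ (circleMap 0 r θ) (circleMap 0 1 θ)) r := by
  obtain ⟨δ, hδ, hδR⟩ : ∃ δ, 0 < δ ∧ |r| + δ < R := ⟨(R - |r|) / 2, by linarith, by linarith⟩
  have hnear : ∀ s ∈ ball r δ, |s| ≤ |r| + δ := fun s hs => by
    have := abs_sub_abs_le_abs_sub s r
    rw [mem_ball, Real.dist_eq] at hs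
    linarith
  have hmem : ∀ s ∈ ball r δ, |s| < R := fun s hs => (hnear s hs).trans_lt hδR
  have hφ' : ContinuousOn (fderiv ℝ φ) (ball 0 R) :=
    hφ.continuousOn_fderiv_of_isOpen isOpen_ball le_rfl
  obtain ⟨C, hC⟩ : ∃ C, ∀ z ∈ closedBall (0 : ℂ) (|r| + δ), ‖fderiv ℝ φ z‖ ≤ C :=
    (isCompact_closedBall _ _).exists_bound_of_continuousOn <|
      hφ'.mono (closedBall_subset_ball hδR)
  have hcont : ∀ {s}, |s| < R → Continuous fun θ => φ (circleMap 0 s θ) := fun hs =>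
    hφ.continuousOn.comp_continuous (continuous_circleMap 0 _) (circleMap_zero_mem_ball hs)
  refine (intervalIntegral.hasDerivAt_integral_of_dominated_loc_of_deriv_le
    (μ := volume) (F := fun s θ => φ (circleMap 0 s θ))
    (F' := fun s θ => fderiv ℝ φ (circleMap 0 s θ) (circleMap 0 1 θ)) (bound := fun _ => C)
    (ball_mem_nhds r hδ) ?_ ?_ ?_ ?_ ?_ ?_).2
  · filter_upwards [ball_mem_nhds r hδ] with s hs
    exact (hcont (hmem s hs)).aestronglyMeasurable
  · exact (hcont hr).intervalIntegrable _ _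
  · exact ((hφ'.comp_continuous (continuous_circleMap 0 r)
      (circleMap_zero_mem_ball hr)).clm_apply (continuous_circleMap 0 1)).aestronglyMeasurable
  · refine ae_of_all _ fun θ _ s hs => ?_
    calc ‖fderiv ℝ φ (circleMap 0 s θ) (circleMap 0 1 θ)‖
        ≤ ‖fderiv ℝ φ (circleMap 0 s θ)‖ * ‖circleMap 0 1 θ‖ :=
          ContinuousLinearMap.le_opNorm _ _
      _ ≤ C := by
        rw [norm_circleMap_zero, abs_one, mul_one]
        exact hC _ (by simpa [norm_circleMap_zero] using hnear s hs)
  · exact intervalIntegrable_const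
  · refine ae_of_all _ fun θ _ s hs => ?_
    have hd : HasDerivAt (fun s : ℝ => circleMap 0 s θ) (circleMap 0 1 θ) s := by
      rw [funext fun s => circleMap_zero_eq_smul s θ]
      simpa using (hasDerivAt_id s).smul_const (circleMap 0 1 θ)
    exact ((hφ.differentiableOn one_ne_zero).differentiableAt (isOpen_ball.mem_nhds
      (circleMap_zero_mem_ball (hmem s hs) θ))).hasFDerivAt.comp_hasDerivAt s hd

/-- The angular derivative of `θ ↦ A (r e^{iθ}) (i e^{iθ})` integrates to zero over a period. -/
theorem integral_apply_circleMap_eq_smul [CompleteSpace F] {A : ℂ → ℂ →L[ℝ] F} {r R : ℝ}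
    (hA : ContDiffOn ℝ 1 A (ball 0 R)) (hr : |r| < R) :
    ∫ θ in 0..2 * π, A (circleMap 0 r θ) (circleMap 0 1 θ) =
      r • ∫ θ in 0..2 * π,
        fderiv ℝ A (circleMap 0 r θ) (I * circleMap 0 1 θ) (I * circleMap 0 1 θ) := by
  have hcA : Continuous fun θ => A (circleMap 0 r θ) :=
    hA.continuousOn.comp_continuous (continuous_circleMap 0 r) (circleMap_zero_mem_ball hr)
  have hcB : Continuous fun θ => fderiv ℝ A (circleMap 0 r θ) :=
    (hA.continuousOn_fderiv_of_isOpen isOpen_ball le_rfl).comp_continuous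
      (continuous_circleMap 0 r) (circleMap_zero_mem_ball hr)
  have hIe : Continuous fun θ => I * circleMap 0 1 θ :=
    continuous_const.mul (continuous_circleMap 0 1)
  have hderiv : ∀ θ, HasDerivAt (fun t => A (circleMap 0 r t) (I * circleMap 0 1 t))
      (r • fderiv ℝ A (circleMap 0 r θ) (I * circleMap 0 1 θ) (I * circleMap 0 1 θ) -
        A (circleMap 0 r θ) (circleMap 0 1 θ)) θ := by
    intro θ
    have hAθ := ((hA.differentiableOn one_ne_zero).differentiableAt (isOpen_ball.mem_nhds
      (circleMap_zero_mem_ball hr θ))).hasFDerivAt.comp_hasDerivAt θ (hasDerivAt_circleMap 0 r θ)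
    refine (hAθ.clm_apply ((hasDerivAt_circleMap 0 1 θ).const_mul I)).congr_deriv ?_
    have hcI : circleMap 0 r θ * I = r • (I * circleMap 0 1 θ) := by
      rw [circleMap_zero_eq_smul, smul_mul_assoc, mul_comm]
    have hIeI : I * (circleMap 0 1 θ * I) = -circleMap 0 1 θ := by
      rw [mul_comm, mul_assoc, I_mul_I, mul_neg_one]
    rw [Function.comp_apply, hcI, hIeI, map_neg, map_smul, smul_apply, sub_eq_add_neg, add_comm]
  have hX : Continuous fun θ =>
      fderiv ℝ A (circleMap 0 r θ) (I * circleMap 0 1 θ) (I * circleMap 0 1 θ) :=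
    (hcB.clm_apply hIe).clm_apply hIe
  have hY : Continuous fun θ => A (circleMap 0 r θ) (circleMap 0 1 θ) :=
    hcA.clm_apply (continuous_circleMap 0 1)
  have hrX : Continuous fun θ =>
      r • fderiv ℝ A (circleMap 0 r θ) (I * circleMap 0 1 θ) (I * circleMap 0 1 θ) :=
    hX.const_smul r
  have hperiod := intervalIntegral.integral_eq_sub_of_hasDerivAt (fun θ _ => hderiv θ)
    ((hrX.sub hY).intervalIntegrable 0 (2 * π))
  rw [(periodic_circleMap 0 r).eq, (periodic_circleMap 0 1).eq, sub_self,
    intervalIntegral.integral_sub (hrX.intervalIntegrable 0 (2 * π))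
      (hY.intervalIntegrable 0 (2 * π)), intervalIntegral.integral_smul, sub_eq_zero] at hperiod
  exact hperiod.symm

theorem ContDiffAt.differentiableAt_fderiv_apply {E : Type*} [NormedAddCommGroup E]
    [NormedSpace ℝ E] {g : E → F} {z : E} (hg : ContDiffAt ℝ 2 g z) (e : E) :
    DifferentiableAt ℝ (fun w => fderiv ℝ g w e) z :=
  ((hg.fderiv_right (m := 1) (by norm_num)).differentiableAt one_ne_zero).clm_apply
    (differentiableAt_const e)

theorem ContDiffAt.eventually_differentiableAt {E : Type*} [NormedAddCommGroup E]
    [NormedSpace ℝ E] {g : E → F} {z : E} (hg : ContDiffAt ℝ 2 g z) :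
    ∀ᶠ w in 𝓝 z, DifferentiableAt ℝ g w :=
  (hg.eventually (by simp)).mono fun _ hw => hw.differentiableAt two_ne_zero

theorem fderiv_apply_self {E : Type*} [NormedAddCommGroup E] [NormedSpace ℝ E]
    {A : E → E →L[ℝ] F} {z : E} (hA : DifferentiableAt ℝ A z) (e : E) :
    fderiv ℝ (fun w => A w w) z e = fderiv ℝ A z e z + A z e := by
  rw [fderiv_clm_apply (u := fun w => w) hA differentiableAt_fun_id, fderiv_fun_id,
    ContinuousLinearMap.comp_id, add_apply, ContinuousLinearMap.flip_apply, add_comm]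

theorem lap_eq_fderiv_fderiv {g : ℂ → F} {z : ℂ} (hg : DifferentiableAt ℝ (fderiv ℝ g) z) :
    lap g z = fderiv ℝ (fderiv ℝ g) z 1 1 + fderiv ℝ (fderiv ℝ g) z I I := by
  simp [lap, fderiv_clm_apply hg (differentiableAt_const _)]

theorem lap_comp_of_hasDerivAt {v : ℂ → ℝ} {φ φ' φ'' : ℝ → ℝ} {z : ℂ}
    (hv : ContDiffAt ℝ 2 v z) (hφ : ∀ᶠ w in 𝓝 z, HasDerivAt φ (φ' (v w)) (v w))
    (hφ' : HasDerivAt φ' (φ'' (v z)) (v z)) :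
    lap (fun w => φ (v w)) z =
      φ'' (v z) * (fderiv ℝ v z 1 ^ 2 + fderiv ℝ v z I ^ 2) + φ' (v z) * lap v z := by
  have hdir : ∀ e, fderiv ℝ (fun w => fderiv ℝ (fun x => φ (v x)) w e) z e =
      φ'' (v z) * fderiv ℝ v z e ^ 2 + φ' (v z) * fderiv ℝ (fun w => fderiv ℝ v w e) z e := by
    intro e
    have hev : (fun w => fderiv ℝ (fun x => φ (v x)) w e) =ᶠ[𝓝 z]
        fun w => φ' (v w) * fderiv ℝ v w e := by
      filter_upwards [hφ, hv.eventually_differentiableAt] with w hφw hvw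
      rw [show fderiv ℝ (fun x => φ (v x)) w = φ' (v w) • fderiv ℝ v w from
        (hφw.comp_hasFDerivAt w hvw.hasFDerivAt).fderiv, smul_apply, smul_eq_mul]
    have hφ'v : HasFDerivAt (fun w => φ' (v w)) (φ'' (v z) • fderiv ℝ v z) z :=
      hφ'.comp_hasFDerivAt z (hv.differentiableAt (by norm_num)).hasFDerivAt
    rw [hev.fderiv_eq, (hφ'v.fun_mul (hv.differentiableAt_fderiv_apply e).hasFDerivAt).fderiv]
    simp only [add_apply, smul_apply, smul_eq_mul]
    ring
  simp only [lap, hdir]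
  ring

end NormedSpace

theorem bilin_diag_add_diag_I_mul_of_norm_eq_one (B : ℂ →L[ℝ] ℂ →L[ℝ] ℝ) {z : ℂ}
    (hz : ‖z‖ = 1) : B z z + B (I * z) (I * z) = B 1 1 + B I I := by
  have hz' : z = z.re • (1 : ℂ) + z.im • I := by apply Complex.ext <;> simp
  have hIz : I * z = (-z.im) • (1 : ℂ) + z.re • I := by apply Complex.ext <;> simp
  have hsq : z.re ^ 2 + z.im ^ 2 = 1 := by
    have := Complex.sq_norm z
    rw [hz, normSq_apply] at this
    linarith
  rw [hIz]
  conv_lhs => arg 1; rw [hz']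
  simp only [map_add, map_smul, add_apply, smul_apply, smul_eq_mul]
  linear_combination (B 1 1 + B I I) * hsq

theorem hasDerivAt_integral_fderiv_circleMap_self {u : ℂ → ℝ} {r R : ℝ}
    (hu : ContDiffOn ℝ 2 u (ball 0 R)) (hr : |r| < R) :
    HasDerivAt (fun s => ∫ θ in 0..2 * π, fderiv ℝ u (circleMap 0 s θ) (circleMap 0 s θ))
      (r * ∫ θ in 0..2 * π, lap u (circleMap 0 r θ)) r := by
  have hA : ContDiffOn ℝ 1 (fderiv ℝ u) (ball 0 R) :=
    hu.fderiv_of_isOpen isOpen_ball (by norm_num)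
  have hAd : ∀ z ∈ ball (0 : ℂ) R, DifferentiableAt ℝ (fderiv ℝ u) z := fun z hz =>
    (hA.differentiableOn one_ne_zero).differentiableAt (isOpen_ball.mem_nhds hz)
  set B := fderiv ℝ (fderiv ℝ u)
  have hcA : Continuous fun θ => fderiv ℝ u (circleMap 0 r θ) :=
    hA.continuousOn.comp_continuous (continuous_circleMap 0 r) (circleMap_zero_mem_ball hr)
  have hcB : Continuous fun θ => B (circleMap 0 r θ) :=
    (hA.continuousOn_fderiv_of_isOpen isOpen_ball le_rfl).comp_continuous
      (continuous_circleMap 0 r) (circleMap_zero_mem_ball hr)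
  have he := continuous_circleMap 0 1
  have hIe : Continuous fun θ => I * circleMap 0 1 θ := continuous_const.mul he
  have hψ : ContDiffOn ℝ 1 (fun z => fderiv ℝ u z z) (ball 0 R) := hA.clm_apply contDiffOn_id
  refine (hasDerivAt_integral_circleMap_radius hψ hr).congr_deriv ?_
  have hpt : ∀ θ, fderiv ℝ (fun z => fderiv ℝ u z z) (circleMap 0 r θ) (circleMap 0 1 θ) =
      r * B (circleMap 0 r θ) (circleMap 0 1 θ) (circleMap 0 1 θ) +
        fderiv ℝ u (circleMap 0 r θ) (circleMap 0 1 θ) := by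
    intro θ
    rw [fderiv_apply_self (hAd _ (circleMap_zero_mem_ball hr θ))]
    congr 1
    rw [← smul_eq_mul, ← map_smul, ← circleMap_zero_eq_smul]
  calc ∫ θ in 0..2 * π, fderiv ℝ (fun z => fderiv ℝ u z z) (circleMap 0 r θ) (circleMap 0 1 θ)
      = r * (∫ θ in 0..2 * π, B (circleMap 0 r θ) (circleMap 0 1 θ) (circleMap 0 1 θ)) +
          ∫ θ in 0..2 * π, fderiv ℝ u (circleMap 0 r θ) (circleMap 0 1 θ) := by
        simp only [hpt]
        rw [intervalIntegral.integral_add, intervalIntegral.integral_const_mul]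
        · exact (continuous_const.mul ((hcB.clm_apply he).clm_apply he)).intervalIntegrable _ _
        · exact (hcA.clm_apply he).intervalIntegrable _ _
    _ = r * ∫ θ in 0..2 * π, (B (circleMap 0 r θ) (circleMap 0 1 θ) (circleMap 0 1 θ) +
          B (circleMap 0 r θ) (I * circleMap 0 1 θ) (I * circleMap 0 1 θ)) := by
        rw [integral_apply_circleMap_eq_smul hA hr, smul_eq_mul, ← mul_add,
          intervalIntegral.integral_add]
        · exact ((hcB.clm_apply he).clm_apply he).intervalIntegrable _ _
        · exact ((hcB.clm_apply hIe).clm_apply hIe).intervalIntegrable _ _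
    _ = r * ∫ θ in 0..2 * π, lap u (circleMap 0 r θ) := by
        congr 1
        refine intervalIntegral.integral_congr fun θ _ => ?_
        rw [lap_eq_fderiv_fderiv (hAd _ (circleMap_zero_mem_ball hr θ)),
          bilin_diag_add_diag_I_mul_of_norm_eq_one _ (by simp [norm_circleMap_zero])]

theorem monotoneOn_Ico_of_hasDerivAt_nonneg {f f' : ℝ → ℝ} {a b : ℝ}
    (hf : ∀ x ∈ Ico a b, HasDerivAt f (f' x) x) (hf' : ∀ x ∈ Ioo a b, 0 ≤ f' x) :
    MonotoneOn f (Ico a b) := by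
  refine monotoneOn_of_hasDerivWithinAt_nonneg (f' := f') (convex_Ico a b)
    (fun x hx => (hf x hx).continuousAt.continuousWithinAt) ?_ (by rwa [interior_Ico])
  rw [interior_Ico]
  exact fun x hx => (hf x (Ioo_subset_Ico_self hx)).hasDerivWithinAt

theorem monotoneOn_integral_circleMap_of_lap_nonneg {u : ℂ → ℝ} {R : ℝ}
    (hu : ContDiffOn ℝ 2 u (ball 0 R)) (hlap : ∀ z ∈ ball 0 R, 0 ≤ lap u z) :
    MonotoneOn (fun r => ∫ θ in 0..2 * π, u (circleMap 0 r θ)) (Ico 0 R) := by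
  have habs : ∀ r ∈ Ico 0 R, |r| < R := fun r hr => (abs_of_nonneg hr.1).trans_lt hr.2
  set g₁ := fun r => ∫ θ in 0..2 * π, fderiv ℝ u (circleMap 0 r θ) (circleMap 0 1 θ)
  have hg : ∀ r ∈ Ico 0 R, HasDerivAt (fun r => ∫ θ in 0..2 * π, u (circleMap 0 r θ)) (g₁ r) r :=
    fun r hr => hasDerivAt_integral_circleMap_radius (hu.of_le one_le_two) (habs r hr)
  set h := fun s => ∫ θ in 0..2 * π, fderiv ℝ u (circleMap 0 s θ) (circleMap 0 s θ)
  have hh : ∀ r ∈ Ico 0 R, HasDerivAt h (r * ∫ θ in 0..2 * π, lap u (circleMap 0 r θ)) r :=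
    fun r hr => hasDerivAt_integral_fderiv_circleMap_self hu (habs r hr)
  have h_eq : ∀ r, h r = r * g₁ r := fun r => by
    rw [← intervalIntegral.integral_const_mul]
    refine intervalIntegral.integral_congr fun θ _ => ?_
    rw [← smul_eq_mul, ← map_smul, ← circleMap_zero_eq_smul]
  have h_mono : MonotoneOn h (Ico 0 R) :=
    monotoneOn_Ico_of_hasDerivAt_nonneg hh fun r hr => mul_nonneg hr.1.le <|
      intervalIntegral.integral_nonneg (by positivity) fun θ _ =>
        hlap _ (circleMap_zero_mem_ball (habs r (Ioo_subset_Ico_self hr)) θ)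
  have hg₁ : ∀ r ∈ Ioo 0 R, 0 ≤ g₁ r := fun r hr => by
    have h0 : h 0 = 0 := by simp [h]
    have := h_mono (left_mem_Ico.2 (hr.1.trans hr.2)) (Ioo_subset_Ico_self hr) hr.1.le
    rw [h0, h_eq] at this
    exact (mul_nonneg_iff_of_pos_left hr.1).mp this
  exact monotoneOn_Ico_of_hasDerivAt_nonneg hg hg₁

section InnerProductSpace

variable {G : Type*} [NormedAddCommGroup G] [InnerProductSpace ℝ G]

theorem lap_norm_sq {f : ℂ → G} {z : ℂ} (hf : ContDiffAt ℝ 2 f z) :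
    lap (fun w => ‖f w‖ ^ 2) z =
      2 * (‖fderiv ℝ f z 1‖ ^ 2 + ‖fderiv ℝ f z I‖ ^ 2) + 2 * inner ℝ (f z) (lap f z) := by
  have hdir : ∀ e, fderiv ℝ (fun w => fderiv ℝ (fun x => ‖f x‖ ^ 2) w e) z e =
      2 * ‖fderiv ℝ f z e‖ ^ 2 + 2 * inner ℝ (f z) (fderiv ℝ (fun w => fderiv ℝ f w e) z e) := by
    intro e
    have hev : (fun w => fderiv ℝ (fun x => ‖f x‖ ^ 2) w e) =ᶠ[𝓝 z]
        fun w => 2 * inner ℝ (f w) (fderiv ℝ f w e) := by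
      filter_upwards [hf.eventually_differentiableAt] with w hfw
      rw [hfw.hasFDerivAt.norm_sq.fderiv]
      simp
    rw [hev.fderiv_eq, fderiv_const_mul ((hf.differentiableAt (by norm_num)).inner ℝ
      (hf.differentiableAt_fderiv_apply e)), smul_apply, smul_eq_mul,
      fderiv_inner_apply ℝ (hf.differentiableAt (by norm_num))
        (hf.differentiableAt_fderiv_apply e), real_inner_self_eq_norm_sq]
    ring
  simp only [lap, hdir, inner_add_right]
  ring

theorem ContDiffAt.rpow_norm_sq_add {f : ℂ → G} {z : ℂ} {n : WithTop ℕ∞} {ε : ℝ}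
    (hf : ContDiffAt ℝ n f z) (hε : 0 < ε) (q : ℝ) :
    ContDiffAt ℝ n (fun w => (‖f w‖ ^ 2 + ε) ^ q) z :=
  (Real.contDiffAt_rpow_const_of_ne (by positivity)).comp z
    (((contDiff_norm_sq ℝ).contDiffAt.comp z hf).add contDiffAt_const)

theorem lap_rpow_norm_sq_add_nonneg {f : ℂ → G} {z : ℂ} {q ε : ℝ} (hf : ContDiffAt ℝ 2 f z)
    (hq : 1 ≤ q) (hε : 0 < ε) (hfz : 0 ≤ inner ℝ (f z) (lap f z)) :
    0 ≤ lap (fun w => (‖f w‖ ^ 2 + ε) ^ q) z := by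
  have hpos : ∀ w, 0 < ‖f w‖ ^ 2 + ε := fun w => by positivity
  rw [lap_comp_of_hasDerivAt (v := fun w => ‖f w‖ ^ 2) (φ := fun t => (t + ε) ^ q)
      (φ' := fun t => q * (t + ε) ^ (q - 1)) (φ'' := fun t => q * ((q - 1) * (t + ε) ^ (q - 1 - 1)))
      ((contDiff_norm_sq ℝ).contDiffAt.comp z hf)
      (Eventually.of_forall fun w => (Real.hasDerivAt_rpow_const (Or.inr hq)).comp_add_const _ _)
      (((Real.hasDerivAt_rpow_const (Or.inl (hpos z).ne')).comp_add_const _ _).const_mul q),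
    lap_norm_sq hf]
  have hq₀ : 0 ≤ q := by linarith
  have hq₁ : 0 ≤ q - 1 := by linarith
  have := Real.rpow_nonneg (hpos z).le (q - 1)
  have := Real.rpow_nonneg (hpos z).le (q - 1 - 1)
  positivity

theorem monotoneOn_integral_circleMap_norm_rpow {f : ℂ → G} {R p : ℝ}
    (hf : ContDiffOn ℝ 2 f (ball 0 R)) (hfΔf : ∀ z ∈ ball 0 R, 0 ≤ inner ℝ (f z) (lap f z))
    (hp : 2 ≤ p) :
    MonotoneOn (fun r => ∫ θ in 0..2 * π, ‖f (circleMap 0 r θ)‖ ^ p) (Ico 0 R) := by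
  have hfz : ∀ z ∈ ball (0 : ℂ) R, ContDiffAt ℝ 2 f z := fun z hz =>
    hf.contDiffAt (isOpen_ball.mem_nhds hz)
  refine monotoneOn_of_frequently_monotoneOn_of_tendsto (l := 𝓝[>] 0)
    (F := fun ε r => ∫ θ in 0..2 * π, (‖f (circleMap 0 r θ)‖ ^ 2 + ε) ^ (p / 2))
    (Eventually.frequently (eventually_nhdsWithin_of_forall fun ε hε => ?_)) fun r hr => ?_
  · exact monotoneOn_integral_circleMap_of_lap_nonneg
      (fun z hz => ((hfz z hz).rpow_norm_sq_add hε _).contDiffWithinAt)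
      fun z hz => lap_rpow_norm_sq_add_nonneg (hfz z hz) (by linarith) hε (hfΔf z hz)
  · have hcont : Continuous fun θ => ‖f (circleMap 0 r θ)‖ ^ 2 :=
      (hf.continuousOn.comp_continuous (continuous_circleMap 0 r)
        (circleMap_zero_mem_ball ((abs_of_nonneg hr.1).trans_lt hr.2))).norm.pow 2
    have hF := intervalIntegral.continuous_parametric_intervalIntegral_of_continuous'
      (μ := volume) (f := fun ε θ => (‖f (circleMap 0 r θ)‖ ^ 2 + ε) ^ (p / 2))
      ((Real.continuous_rpow_const (by linarith)).comp
        ((hcont.comp continuous_snd).add continuous_fst)) 0 (2 * π)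
    convert (hF.tendsto 0).mono_left nhdsWithin_le_nhds using 4 with θ
    rw [add_zero, ← Real.rpow_natCast, ← Real.rpow_mul (norm_nonneg _), Nat.cast_ofNat,
      mul_div_cancel₀ p two_ne_zero]

end InnerProductSpace

/-- If f ∈ C²(𝔻) and Re(conj(f)·Δf) ≥ 0 on 𝔻, then for every
p ∈ [2,∞), r ↦ M_p^p(r,f) = (1/2π)∫₀^{2π}|f(re^{iθ})|^p dθ is increasing on (0,1). -/
theorem integral_means_monotone (f : ℂ → ℂ)
    (hf : ContDiffOn ℝ 2 f (ball (0:ℂ) 1))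
    (hRe : ∀ z ∈ ball (0:ℂ) 1, 0 ≤ ((starRingEnd ℂ) (f z) * lap f z).re)
    (p : ℝ) (hp : 2 ≤ p) :
    MonotoneOn (fun r : ℝ =>
      (1 / (2 * Real.pi)) *
        ∫ θ in (0:ℝ)..(2 * Real.pi), ‖f ((r : ℂ) * Complex.exp (θ * Complex.I))‖ ^ p)
      (Set.Ioo 0 1) := by
  have hfΔf : ∀ z ∈ ball (0 : ℂ) 1, 0 ≤ inner ℝ (f z) (lap f z) := fun z hz => by
    rw [Complex.inner, mul_comm]
    exact hRe z hz
  have hmono := (monotoneOn_integral_circleMap_norm_rpow hf hfΔf hp).mono Ioo_subset_Ico_self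
  simp only [circleMap_zero] at hmono
  exact fun a ha b hb hab => mul_le_mul_of_nonneg_left (hmono ha hb hab) (by positivity)
end

section
/- Let f be a harmonic mapping on the unit disk 𝔻 and 1 ≤ α < 2 and ω a majorant with ω(t) > 0 for t > 0. Suppose there is a constant C₂ > 0 such that for all z ∈ 𝔻 and r ∈ (0, 1-|z|], the mean oscillation satisfies (1/|𝔻(z,r)|)∫_{𝔻(z,r)} |f(ζ) − f_{𝔻(z,r)}| dA(ζ) ≤ C₂ r / ω(r^α), where f_{𝔻(z,r)} is the average of f over 𝔻(z,r). Then ‖D_f(z)‖ ≤ 12 C₂ / ω((1-|z|)^α) for all z ∈ 𝔻. -/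
open Complex Metric MeasureTheory

/-- Wirtinger derivative f_z = (f_x - i f_y)/2. -/
noncomputable def wd (f : ℂ → ℂ) (z : ℂ) : ℂ :=
  (fderiv ℝ f z 1 - Complex.I * fderiv ℝ f z Complex.I) / 2

/-- Wirtinger derivative f_z̄ = (f_x + i f_y)/2. -/
noncomputable def wdb (f : ℂ → ℂ) (z : ℂ) : ℂ :=
  (fderiv ℝ f z 1 + Complex.I * fderiv ℝ f z Complex.I) / 2

/-- ‖D_f(z)‖ = |f_z(z)| + |f_z̄(z)|. -/
noncomputable def Dnorm (f : ℂ → ℂ) (z : ℂ) : ℝ := ‖wd f z‖ + ‖wdb f z‖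

/-- A harmonic mapping on an open set: C² with vanishing Laplacian. -/
def HarmonicMappingOn (f : ℂ → ℂ) (U : Set ℂ) : Prop :=
  ContDiffOn ℝ 2 f U ∧ ∀ z ∈ U, lap f z = 0

open ComplexConjugate Real Set Filter Interval

/-! For a harmonic map `f`, both `f_z` and `(conj f)_z` are holomorphic, and
`f_z̄ = conj ((conj f)_z)`. Writing `f (a + v) - f a` as the integral of `D f` along the segment
and applying the mean value property to these two holomorphic functions, the average of
`conj (w - a) * f w` over the circle `|w - a| = ρ` is `ρ² f_z(a)`; integrating in polar
coordinates, `∫_{𝔻(a,r)} conj (w - a) f(w) dA = π r⁴ / 2 · f_z(a)`. Hence `|f_z(a)|`, and likewise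
`|f_z̄(a)|`, is at most `2 / (π r³) ∫_{𝔻(a,r)} |f|`. Applied to `f` minus its mean over `𝔻(a,r)`,
this bounds `‖D_f(a)‖` by `4 / r` times the mean oscillation, hence by `4 C₂ / ω(r^α)` for every
`r < 1 - |a|`, and continuity of `ω` lets `r → 1 - |a|`. -/

theorem fderiv_apply_eq_wd_mul_add_wdb_mul_conj (f : ℂ → ℂ) (z v : ℂ) :
    fderiv ℝ f z v = wd f z * v + wdb f z * conj v := by
  have hv : v = v.re • (1 : ℂ) + v.im • I := by simp
  conv_lhs => rw [hv, map_add, map_smul, map_smul]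
  conv_rhs => rw [← re_add_im v]
  simp only [wd, wdb, real_smul, map_add, map_mul, conj_ofReal, conj_I]
  linear_combination (v.im * fderiv ℝ f z I) * I_sq

theorem fderiv_conj_comp_apply (f : ℂ → ℂ) (z v : ℂ) :
    fderiv ℝ (fun w => conj (f w)) z v = conj (fderiv ℝ f z v) := by
  change fderiv ℝ (conjCLE ∘ f) z v = _
  rw [conjCLE.comp_fderiv]
  rfl

theorem wd_conj_comp (f : ℂ → ℂ) (z : ℂ) : wd (fun w => conj (f w)) z = conj (wdb f z) := by
  simp only [wd, wdb, fderiv_conj_comp_apply, map_div₀, map_add, map_mul, conj_I, map_ofNat]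
  ring

theorem wdb_eq_conj_wd_conj_comp (f : ℂ → ℂ) (z : ℂ) :
    wdb f z = conj (wd (fun w => conj (f w)) z) := by
  rw [wd_conj_comp, conj_conj]

theorem wd_sub_const (f : ℂ → ℂ) (c z : ℂ) : wd (fun w => f w - c) z = wd f z := by
  simp only [wd, fderiv_sub_const]

theorem wdb_sub_const (f : ℂ → ℂ) (c z : ℂ) : wdb (fun w => f w - c) z = wdb f z := by
  simp only [wdb, fderiv_sub_const]

theorem dnorm_sub_const (f : ℂ → ℂ) (c z : ℂ) : Dnorm (fun w => f w - c) z = Dnorm f z := by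
  simp only [Dnorm, wd_sub_const, wdb_sub_const]

theorem lap_conj_comp (f : ℂ → ℂ) (z : ℂ) :
    lap (fun w => conj (f w)) z = conj (lap f z) := by
  simp only [lap, fderiv_conj_comp_apply, map_add]

theorem lap_sub_const (f : ℂ → ℂ) (c z : ℂ) : lap (fun w => f w - c) z = lap f z := by
  simp only [lap, fderiv_sub_const]

theorem conj_mul_eq_intervalIntegral_wd {f : ℂ → ℂ} {U : Set ℂ} (hf : ContDiffOn ℝ 1 f U)
    (hU : IsOpen U) {a v : ℂ} (hseg : ∀ t ∈ Icc (0 : ℝ) 1, a + t • v ∈ U) :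
    conj v * f (a + v) = ∫ t in (0 : ℝ)..1, ((‖v‖ ^ 2 : ℝ) * wd f (a + t • v) +
      conj (v * (conj (f a) + v * wd (fun w => conj (f w)) (a + t • v)))) := by
  have htaylor : f (a + v) = f a + ∫ t in (0 : ℝ)..1, fderiv ℝ f (a + t • v) v := by
    simpa using map_add_eq_sum_add_integral_iteratedFDeriv (n := 0) (f := f) (x := a) (y := v)
      fun t ht => hf.contDiffAt (hU.mem_nhds (hseg t ht))
  have hint : IntervalIntegrable (fun t : ℝ => fderiv ℝ f (a + t • v) v) volume 0 1 :=
    ContinuousOn.intervalIntegrable_of_Icc zero_le_one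
      (((hf.continuousOn_fderiv_of_isOpen hU le_rfl).comp (by fun_prop) hseg).clm_apply
        continuousOn_const)
  calc conj v * f (a + v)
      = ∫ t in (0 : ℝ)..1, (conj v * f a + conj v * fderiv ℝ f (a + t • v) v) := by
        rw [intervalIntegral.integral_add intervalIntegrable_const (hint.const_mul _),
          intervalIntegral.integral_const_mul, htaylor]
        simp [mul_add]
    _ = _ := by
        refine intervalIntegral.integral_congr fun t _ => ?_
        simp only [fderiv_apply_eq_wd_mul_add_wdb_mul_conj, wdb_eq_conj_wd_conj_comp, map_mul,
          map_add, conj_conj]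
        push_cast
        rw [← Complex.conj_mul']
        ring

theorem circleAverage_conj_comp (F : ℂ → ℂ) (c : ℂ) (R : ℝ) :
    circleAverage (fun w => conj (F w)) c R = conj (circleAverage F c R) := by
  simp only [circleAverage_def, intervalIntegral.integral_of_le two_pi_pos.le, integral_conj]
  simp [Complex.real_smul, map_ofNat]

theorem circleAverage_intervalIntegral_comm {E : Type*} [NormedAddCommGroup E]
    [NormedSpace ℝ E] [CompleteSpace E] {F : ℝ → ℂ → E} {a b : ℝ} {c : ℂ} {R : ℝ}
    (hF : ContinuousOn (fun p : ℝ × ℝ => F p.2 (circleMap c R p.1))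
      ([[0, 2 * π]] ×ˢ [[a, b]])) :
    circleAverage (fun w => ∫ t in a..b, F t w) c R = ∫ t in a..b, circleAverage (F t) c R := by
  simp only [circleAverage_def, intervalIntegral.integral_smul]
  congr 1
  refine intervalIntegral_intervalIntegral_swap ?_
  exact (hF.integrableOn_compact (isCompact_uIcc.prod isCompact_uIcc)).mono_set
    (prod_mono uIoc_subset_uIcc uIoc_subset_uIcc)

theorem DifferentiableOn.circleAverage_eq {E : Type*} [NormedAddCommGroup E]
    [NormedSpace ℂ E] [CompleteSpace E] {H : ℂ → E} {c : ℂ} {R : ℝ}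
    (hR : 0 ≤ R) (hH : DifferentiableOn ℂ H (closedBall c R)) : circleAverage H c R = H c :=
  (hH.diffContOnCl_ball (by rw [abs_of_nonneg hR])).circleAverage

theorem DifferentiableOn.circleAverage_add_conj {H₁ H₂ : ℂ → ℂ} {c : ℂ} {R : ℝ}
    (hR : 0 ≤ R) (h₁ : DifferentiableOn ℂ H₁ (closedBall c R))
    (h₂ : DifferentiableOn ℂ H₂ (closedBall c R)) :
    circleAverage (fun w => H₁ w + conj (H₂ w)) c R = H₁ c + conj (H₂ c) := by
  rw [circleAverage_fun_add ((h₁.continuousOn.mono sphere_subset_closedBall).circleIntegrable hR)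
    (((Complex.continuous_conj.comp_continuousOn' h₂.continuousOn).mono
      sphere_subset_closedBall).circleIntegrable hR),
    circleAverage_conj_comp, h₁.circleAverage_eq hR, h₂.circleAverage_eq hR]

theorem integral_ball_eq_integral_circleAverage {E : Type*} [NormedAddCommGroup E]
    [NormedSpace ℝ E] [CompleteSpace E] {F : ℂ → E} {c : ℂ} {r : ℝ}
    (hr : 0 ≤ r) (hF : ContinuousOn F (closedBall c r)) :
    ∫ w in ball c r, F w = ∫ ρ in (0 : ℝ)..r, (2 * π * ρ) • circleAverage F c ρ := by
  have htrans : ∫ w in ball c r, F w = ∫ ζ in ball (0 : ℂ) r, F (c + ζ) := by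
    rw [← (measurePreserving_add_left volume c).setIntegral_preimage_emb
      (MeasurableEquiv.addLeft c).measurableEmbedding]
    congr 1
    ext ζ
    simp
  have hpolar : ∫ ζ in ball (0 : ℂ) r, F (c + ζ) =
      ∫ p in Ioo 0 r ×ˢ Ioo (-π) π, p.1 • F (circleMap c p.1 p.2) := by
    have hset : Ioo 0 r ×ˢ Ioo (-π) π = polarCoord.target ∩ (Iio r ×ˢ univ) := by
      rw [polarCoord_target, prod_inter_prod, Ioi_inter_Iio, inter_univ]
    rw [← integral_indicator measurableSet_ball, ← Complex.integral_comp_polarCoord_symm, hset,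
      ← setIntegral_indicator (measurableSet_Iio.prod MeasurableSet.univ)]
    refine setIntegral_congr_fun polarCoord.open_target.measurableSet fun p hp => ?_
    have hp₁ : 0 < p.1 := hp.1
    by_cases hpr : p.1 < r
    · simp [indicator, hpr, abs_of_pos hp₁, circleMap, Complex.exp_mul_I]
    · simp [indicator, hpr, abs_of_pos hp₁]
  have hint : IntegrableOn (fun p : ℝ × ℝ => p.1 • F (circleMap c p.1 p.2))
      (Ioo 0 r ×ˢ Ioo (-π) π) (volume.prod volume) := by
    have hmaps : MapsTo (fun p : ℝ × ℝ => circleMap c p.1 p.2) (Icc 0 r ×ˢ Icc (-π) π)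
        (closedBall c r) := fun p hp => by
      simpa [dist_eq_norm, circleMap, abs_of_nonneg hp.1.1] using hp.1.2
    rw [← Measure.volume_eq_prod]
    refine (ContinuousOn.integrableOn_compact (isCompact_Icc.prod isCompact_Icc) ?_).mono_set
      (prod_mono Ioo_subset_Icc_self Ioo_subset_Icc_self)
    exact continuousOn_fst.smul (hF.comp (by fun_prop) hmaps)
  rw [htrans, hpolar, Measure.volume_eq_prod, setIntegral_prod _ hint,
    intervalIntegral.integral_of_le hr, integral_Ioc_eq_integral_Ioo]
  refine setIntegral_congr_fun measurableSet_Ioo fun ρ hρ => ?_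
  rw [integral_smul, circleAverage_eq_integral_add (-π), smul_smul,
    intervalIntegral.integral_comp_add_right (fun θ => F (circleMap c ρ θ)),
    ← integral_Ioc_eq_integral_Ioo, ← intervalIntegral.integral_of_le (by linarith [pi_pos])]
  have hπ : 2 * π * ρ * (2 * π)⁻¹ = ρ := by field_simp
  rw [hπ, zero_add, show 2 * π + -π = π by ring]

namespace HarmonicMappingOn

variable {f : ℂ → ℂ} {U : Set ℂ} {a : ℂ} {r ρ : ℝ}

theorem conj_comp (hf : HarmonicMappingOn f U) : HarmonicMappingOn (fun w => conj (f w)) U :=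
  ⟨(conjCLE : ℂ →L[ℝ] ℂ).contDiff.comp_contDiffOn hf.1,
    fun z hz => by rw [lap_conj_comp, hf.2 z hz, map_zero]⟩

theorem sub_const (hf : HarmonicMappingOn f U) (c : ℂ) : HarmonicMappingOn (fun w => f w - c) U :=
  ⟨hf.1.sub contDiffOn_const, fun z hz => by rw [lap_sub_const, hf.2 z hz]⟩

/-- `f_z` satisfies the Cauchy–Riemann equations because `f_{z z̄} = Δf / 4 = 0`. -/
theorem differentiableOn_wd (hf : HarmonicMappingOn f U) (hU : IsOpen U) :
    DifferentiableOn ℂ (wd f) U := by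
  intro z hz
  have hf2 : ContDiffAt ℝ 2 f z := hf.1.contDiffAt (hU.mem_nhds hz)
  have hΦ : HasFDerivAt (fderiv ℝ f) (fderiv ℝ (fderiv ℝ f) z) z :=
    ((hf2.fderiv_right (m := 1) le_rfl).differentiableAt one_ne_zero).hasFDerivAt
  set Φ := fderiv ℝ (fderiv ℝ f) z
  have hsymm : Φ I 1 = Φ 1 I := hf2.isSymmSndFDerivAt (by simp) I 1
  have happly (v : ℂ) : HasFDerivAt (fun w => fderiv ℝ f w v)
      ((ContinuousLinearMap.apply ℝ ℂ v).comp Φ) z :=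
    (ContinuousLinearMap.apply ℝ ℂ v).hasFDerivAt.comp z hΦ
  have hlap : Φ 1 1 + Φ I I = 0 := by
    simpa [lap, (happly 1).fderiv, (happly I).fderiv] using hf.2 z hz
  have hwd : HasFDerivAt (wd f) ((2 : ℂ)⁻¹ • ((ContinuousLinearMap.apply ℝ ℂ 1).comp Φ -
      I • (ContinuousLinearMap.apply ℝ ℂ I).comp Φ)) z := by
    have : wd f = fun w => (2 : ℂ)⁻¹ * (fderiv ℝ f w 1 - I * fderiv ℝ f w I) := by
      funext w; rw [wd]; ring
    exact this ▸ ((happly 1).sub ((happly I).const_mul I)).const_mul (2 : ℂ)⁻¹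
  refine (differentiableAt_complex_iff_differentiableAt_real.2
    ⟨hwd.differentiableAt, ?_⟩).differentiableWithinAt
  simp only [hwd.fderiv, smul_apply, sub_apply,
    ContinuousLinearMap.coe_comp, Function.comp_apply, ContinuousLinearMap.apply_apply,
    smul_eq_mul]
  linear_combination
    (2 : ℂ)⁻¹ * hsymm + (2 : ℂ)⁻¹ * Φ 1 I * I_sq - (2 : ℂ)⁻¹ * I * hlap

theorem circleAverage_conj_sub_mul (hf : HarmonicMappingOn f U) (hU : IsOpen U) (hρ : 0 ≤ ρ)
    (hsub : closedBall a ρ ⊆ U) :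
    circleAverage (fun w => conj (w - a) * f w) a ρ = ρ ^ 2 * wd f a := by
  set K := wd (fun w => conj (f w))
  have hH : DifferentiableOn ℂ (wd f) U := hf.differentiableOn_wd hU
  have hK : DifferentiableOn ℂ K U := hf.conj_comp.differentiableOn_wd hU
  have hseg : ∀ t ∈ Icc (0 : ℝ) 1, ∀ w ∈ closedBall a ρ,
      a + t • (w - a) ∈ closedBall a ρ :=
    fun t ht w hw => (convex_closedBall a ρ).add_smul_sub_mem (mem_closedBall_self hρ) hw ht
  have hcomp : ∀ t ∈ Icc (0 : ℝ) 1, ∀ {H : ℂ → ℂ}, DifferentiableOn ℂ H U →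
      DifferentiableOn ℂ (fun w => H (a + t • (w - a))) (closedBall a ρ) :=
    fun t ht H hH => hH.comp (by fun_prop) fun w hw => hsub (hseg t ht w hw)
  -- `Q t` is holomorphic plus the conjugate of a holomorphic function vanishing at `a`
  set Q : ℝ → ℂ → ℂ := fun t w => (ρ ^ 2 : ℝ) * wd f (a + t • (w - a)) +
    conj ((w - a) * (conj (f a) + (w - a) * K (a + t • (w - a))))
  have hpt : EqOn (fun w => conj (w - a) * f w) (fun w => ∫ t in (0 : ℝ)..1, Q t w)
      (sphere a |ρ|) := by
    intro w hw
    rw [abs_of_nonneg hρ, mem_sphere_iff_norm] at hw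
    have hsegw : ∀ t ∈ Icc (0 : ℝ) 1, a + t • (w - a) ∈ U :=
      fun t ht => hsub (hseg t ht w (by simp [dist_eq_norm, hw]))
    have h := conj_mul_eq_intervalIntegral_wd (hf.1.of_le one_le_two) hU hsegw
    rwa [add_sub_cancel, hw] at h
  have hmaps : MapsTo (fun p : ℝ × ℝ => a + p.2 • (circleMap a ρ p.1 - a))
      ([[0, 2 * π]] ×ˢ [[0, 1]]) U := by
    rintro ⟨θ, t⟩ ⟨-, ht⟩
    rw [uIcc_of_le zero_le_one] at ht
    exact hsub (hseg t ht _ (circleMap_mem_closedBall a hρ θ))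
  have hcont : Continuous fun p : ℝ × ℝ => a + p.2 • (circleMap a ρ p.1 - a) := by fun_prop
  have hQcont : ContinuousOn (fun p : ℝ × ℝ => Q p.2 (circleMap a ρ p.1))
      ([[0, 2 * π]] ×ˢ [[0, 1]]) := by
    have hcirc : Continuous fun p : ℝ × ℝ => circleMap a ρ p.1 - a := by fun_prop
    exact (continuousOn_const.mul (hH.continuousOn.comp hcont.continuousOn hmaps)).add
      (Complex.continuous_conj.comp_continuousOn (hcirc.continuousOn.mul
        (continuousOn_const.add (hcirc.continuousOn.mul
          (hK.continuousOn.comp hcont.continuousOn hmaps)))))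
  have hQ : ∀ t ∈ Icc (0 : ℝ) 1, circleAverage (Q t) a ρ = ρ ^ 2 * wd f a := by
    intro t ht
    have h₁ := hcomp t ht hH
    have h₂ := hcomp t ht hK
    have hlin : DifferentiableOn ℂ (fun w : ℂ => w - a) (closedBall a ρ) := by fun_prop
    exact (DifferentiableOn.circleAverage_add_conj hρ (h₁.const_mul _)
      (hlin.mul ((hlin.mul h₂).const_add _))).trans (by simp)
  rw [circleAverage_congr_sphere hpt, circleAverage_intervalIntegral_comm hQcont,
    intervalIntegral.integral_congr fun t ht => hQ t (by rwa [uIcc_of_le zero_le_one] at ht)]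
  simp

theorem integral_ball_conj_sub_mul (hf : HarmonicMappingOn f U) (hU : IsOpen U) (hr : 0 ≤ r)
    (hsub : closedBall a r ⊆ U) :
    ∫ w in ball a r, conj (w - a) * f w = (π * r ^ 4 / 2) • wd f a := by
  have hcont : ContinuousOn (fun w => conj (w - a) * f w) (closedBall a r) :=
    (by fun_prop : Continuous fun w : ℂ => conj (w - a)).continuousOn.mul
      (hf.1.continuousOn.mono hsub)
  rw [integral_ball_eq_integral_circleAverage hr hcont]
  calc ∫ ρ in (0 : ℝ)..r, (2 * π * ρ) • circleAverage (fun w => conj (w - a) * f w) a ρ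
      = ∫ ρ in (0 : ℝ)..r, (2 * π * ρ ^ 3) • wd f a := by
        refine intervalIntegral.integral_congr fun ρ hρ => ?_
        rw [uIcc_of_le hr] at hρ
        rw [hf.circleAverage_conj_sub_mul hU hρ.1
          ((closedBall_subset_closedBall hρ.2).trans hsub), real_smul, real_smul]
        push_cast
        ring
    _ = (π * r ^ 4 / 2) • wd f a := by
        rw [intervalIntegral.integral_smul_const, intervalIntegral.integral_const_mul,
          integral_pow]
        ring_nf

theorem norm_wd_le (hf : HarmonicMappingOn f U) (hU : IsOpen U) (hr : 0 < r)
    (hsub : closedBall a r ⊆ U) :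
    ‖wd f a‖ ≤ 2 / (π * r ^ 3) * ∫ w in ball a r, ‖f w‖ := by
  have hint : IntegrableOn (fun w => ‖f w‖) (ball a r) :=
    ((hf.1.continuousOn.mono hsub).norm.integrableOn_compact
      (isCompact_closedBall a r)).mono_set ball_subset_closedBall
  have hbound : π * r ^ 4 / 2 * ‖wd f a‖ ≤ r * ∫ w in ball a r, ‖f w‖ := by
    calc π * r ^ 4 / 2 * ‖wd f a‖ = ‖∫ w in ball a r, conj (w - a) * f w‖ := by
          rw [hf.integral_ball_conj_sub_mul hU hr.le hsub, norm_smul, Real.norm_of_nonneg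
            (by positivity)]
      _ ≤ ∫ w in ball a r, r * ‖f w‖ := by
          refine norm_integral_le_of_norm_le (hint.const_mul r)
            (ae_restrict_of_forall_mem measurableSet_ball fun w hw => ?_)
          rw [norm_mul, RCLike.norm_conj, ← dist_eq_norm]
          exact mul_le_mul_of_nonneg_right (mem_ball.1 hw).le (norm_nonneg _)
      _ = r * ∫ w in ball a r, ‖f w‖ := integral_const_mul r _
  rw [div_mul_eq_mul_div, le_div_iff₀ (by positivity)]
  nlinarith [hbound]

theorem dnorm_le (hf : HarmonicMappingOn f U) (hU : IsOpen U) (hr : 0 < r)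
    (hsub : closedBall a r ⊆ U) :
    Dnorm f a ≤ 4 / (π * r ^ 3) * ∫ w in ball a r, ‖f w‖ := by
  have hwdb : ‖wdb f a‖ ≤ 2 / (π * r ^ 3) * ∫ w in ball a r, ‖f w‖ := by
    simpa [wd_conj_comp] using hf.conj_comp.norm_wd_le hU hr hsub
  have hwd := hf.norm_wd_le hU hr hsub
  calc Dnorm f a = ‖wd f a‖ + ‖wdb f a‖ := rfl
    _ ≤ 2 / (π * r ^ 3) * (∫ w in ball a r, ‖f w‖) +
          2 / (π * r ^ 3) * ∫ w in ball a r, ‖f w‖ := add_le_add hwd hwdb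
    _ = 4 / (π * r ^ 3) * ∫ w in ball a r, ‖f w‖ := by ring

theorem dnorm_le_mul_meanOscillation (hf : HarmonicMappingOn f U) (hU : IsOpen U) (hr : 0 < r)
    (hsub : closedBall a r ⊆ U) (c : ℂ) :
    Dnorm f a ≤ 4 / r * (1 / (π * r ^ 2) * ∫ w in ball a r, ‖f w - c‖) :=
  calc Dnorm f a = Dnorm (fun w => f w - c) a := (dnorm_sub_const f c a).symm
    _ ≤ 4 / (π * r ^ 3) * ∫ w in ball a r, ‖f w - c‖ := (hf.sub_const c).dnorm_le hU hr hsub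
    _ = 4 / r * (1 / (π * r ^ 2) * ∫ w in ball a r, ‖f w - c‖) := by field_simp

end HarmonicMappingOn

theorem mean_oscillation_implies_bloch_general (α : ℝ)
    (ω : ℝ → ℝ)
    (hcont : ContinuousOn ω (Set.Ici 0))
    (hpos : ∀ t : ℝ, 0 < t → 0 < ω t)
    (f : ℂ → ℂ) (hharm : HarmonicMappingOn f (ball (0:ℂ) 1))
    (C₂ : ℝ) (hC₂ : 0 < C₂)
    (hmo : ∀ z ∈ ball (0:ℂ) 1, ∀ r ∈ Set.Ioc (0:ℝ) (1 - ‖z‖),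
      (1 / (Real.pi * r ^ 2)) *
        ∫ ζ in ball z r,
          ‖f ζ - (Real.pi * r ^ 2)⁻¹ • ∫ ξ in ball z r, f ξ‖ ≤
        C₂ * r / ω (r ^ α)) :
    ∀ z ∈ ball (0:ℂ) 1, Dnorm f z ≤ 12 * C₂ / ω ((1 - ‖z‖) ^ α) := by
  intro a ha
  have hR : 0 < 1 - ‖a‖ := by simpa using ha
  have hbound : ∀ r ∈ Ioo 0 (1 - ‖a‖), Dnorm f a ≤ 4 * C₂ / ω (r ^ α) := by
    rintro r ⟨hr₀, hrR⟩
    have hsub : closedBall a r ⊆ ball 0 1 :=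
      closedBall_subset_ball' (by rw [dist_zero_right]; linarith)
    have hωr : ω (r ^ α) ≠ 0 := (hpos _ (rpow_pos_of_pos hr₀ α)).ne'
    calc Dnorm f a ≤ 4 / r * (C₂ * r / ω (r ^ α)) :=
          (hharm.dnorm_le_mul_meanOscillation isOpen_ball hr₀ hsub _).trans
            (mul_le_mul_of_nonneg_left (hmo a ha r ⟨hr₀, hrR.le⟩) (by positivity))
      _ = 4 * C₂ / ω (r ^ α) := by field_simp
  have hωR : 0 < ω ((1 - ‖a‖) ^ α) := hpos _ (rpow_pos_of_pos hR α)
  have hω : ContinuousAt (fun r => ω (r ^ α)) (1 - ‖a‖) :=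
    (hcont.continuousAt (Ici_mem_nhds (rpow_pos_of_pos hR α))).comp (f := fun r => r ^ α)
      (continuousAt_rpow_const _ α (Or.inl hR.ne'))
  calc Dnorm f a ≤ 4 * C₂ / ω ((1 - ‖a‖) ^ α) :=
        ge_of_tendsto (tendsto_const_nhds.div (hω.tendsto.mono_left nhdsWithin_le_nhds) hωR.ne')
          (eventually_of_mem (Ioo_mem_nhdsLT hR) hbound)
    _ ≤ 12 * C₂ / ω ((1 - ‖a‖) ^ α) := by gcongr; norm_num

/-- Let f be harmonic on 𝔻, 1 ≤ α < 2, ω a majorant with ω > 0 on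
(0,∞).  If for all z ∈ 𝔻 and r ∈ (0,1-|z|] the mean oscillation of f over
𝔻(z,r) is at most C₂ r/ω(r^α), then ‖D_f(z)‖ ≤ 12 C₂/ω((1-|z|)^α) on 𝔻. -/
theorem mean_oscillation_implies_bloch (α : ℝ) (hα1 : 1 ≤ α) (hα2 : α < 2)
    (ω : ℝ → ℝ)
    (hcont : ContinuousOn ω (Set.Ici 0))
    (hmono : MonotoneOn ω (Set.Ici 0))
    (h0 : ω 0 = 0)
    (hpos : ∀ t : ℝ, 0 < t → 0 < ω t)
    (hdec : ∀ u t : ℝ, 0 < u → u ≤ t → ω t / t ≤ ω u / u)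
    (f : ℂ → ℂ) (hharm : HarmonicMappingOn f (ball (0:ℂ) 1))
    (C₂ : ℝ) (hC₂ : 0 < C₂)
    (hmo : ∀ z ∈ ball (0:ℂ) 1, ∀ r ∈ Set.Ioc (0:ℝ) (1 - ‖z‖),
      (1 / (Real.pi * r ^ 2)) *
        ∫ ζ in ball z r,
          ‖f ζ - (Real.pi * r ^ 2)⁻¹ • ∫ ξ in ball z r, f ξ‖ ≤
        C₂ * r / ω (r ^ α)) :
    ∀ z ∈ ball (0:ℂ) 1, Dnorm f z ≤ 12 * C₂ / ω ((1 - ‖z‖) ^ α) :=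
  mean_oscillation_implies_bloch_general α ω hcont hpos f hharm C₂ hC₂ hmo
end
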